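/- arXiv:1707.08860 — 3 statements merged into one kernel-verified Lean document; each statement's English description precedes it below -/
import Mathlib

section
/- For n exchangeable random variables, P_{n,k} = Σ_{i=k}^{n} A^{n,k}_i · P_i, where the integer coefficients A^{n,k}_i are defined by the recurrence A^{n,k}_k = 1 and A^{n,k}_i = −Σ_{j=1}^{i−k} C(n−i+j, j) · A^{n,k}_{i−j} for k+1 ≤ i ≤ n. -/
open MeasureTheory Finset

/-- Coefficients `A^{n,k}_i` defined by `A^{n,k}_k = 1` and
`A^{n,k}_i = -∑_{j=1}^{i-k} C(n-i+j, j) · A^{n,k}_{i-j}` for `i > k`. -/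
def Acoef (n k : ℕ) : ℕ → ℤ
  | i =>
    if i ≤ k then (if i = k then 1 else 0)
    else -∑ j ∈ (Finset.Icc 1 (i - k)).attach,
        ((n - i + j.1).choose j.1 : ℤ) * Acoef n k (i - j.1)
  termination_by i => i
  decreasing_by
    have hj := j.2
    simp only [Finset.mem_Icc] at hj
    omega

/-- `X 0, ..., X (n-1)` are exchangeable (jointly-identical) random variables:
the joint distribution is invariant under any permutation of the indices. -/
def Exchangeable {Ω : Type*} [MeasurableSpace Ω] (μ : MeasureTheory.Measure Ω) {n : ℕ}
    (X : Fin n → Ω → ℝ) : Prop :=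
  ∀ σ : Equiv.Perm (Fin n),
    μ.map (fun ω => fun i => X (σ i) ω) = μ.map (fun ω => fun i => X i ω)

/-- `P_j(t) = P(X_1 ≤ t, ..., X_j ≤ t)`, the CDF of the maximum of the first `j` variables. -/
noncomputable def Pmax {Ω : Type*} [MeasurableSpace Ω] (μ : MeasureTheory.Measure Ω) {n : ℕ}
    (X : Fin n → Ω → ℝ) (j : ℕ) (t : ℝ) : ℝ :=
  (μ {ω | ∀ i : Fin n, (i : ℕ) < j → X i ω ≤ t}).toReal

/-- `P_{n,k}(t) = P(X_1 ≤ t, ..., X_k ≤ t, X_{k+1} > t, ..., X_n > t)`. -/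
noncomputable def Pjoint {Ω : Type*} [MeasurableSpace Ω] (μ : MeasureTheory.Measure Ω) {n : ℕ}
    (X : Fin n → Ω → ℝ) (k : ℕ) (t : ℝ) : ℝ :=
  (μ {ω | (∀ i : Fin n, (i : ℕ) < k → X i ω ≤ t) ∧ ∀ i : Fin n, k ≤ (i : ℕ) → t < X i ω}).toReal



----------------------------------------------------------------
-- Auxiliary lemmas
----------------------------------------------------------------

lemma Acoef_self (n k : ℕ) : Acoef n k k = 1 := by
  rw [Acoef]; simp

lemma Acoef_orth (n k : ℕ) : ∀ m, k ≤ m → m ≤ n →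
    ∑ i ∈ Icc k m, ((n - i).choose (m - i) : ℤ) * Acoef n k i
      = if m = k then 1 else 0 := by
  intro m hk hm
  by_cases h : m = k
  · subst h
    simp [Acoef_self]
  · rw [if_neg h]
    have hkm : k < m := lt_of_le_of_ne hk (Ne.symm h)
    have hsplit : Icc k m = insert m (Icc k (m - 1)) := by
      ext x; simp only [mem_insert, mem_Icc]; omega
    rw [hsplit, Finset.sum_insert (by simp; omega)]
    have hAm : Acoef n k m
        = -∑ j ∈ Finset.Icc 1 (m - k),
            ((n - m + j).choose j : ℤ) * Acoef n k (m - j) := by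
      rw [Acoef, if_neg (by omega)]
      congr 1
      exact Finset.sum_attach (Icc 1 (m - k))
        (fun j => ((n - m + j).choose j : ℤ) * Acoef n k (m - j))
    have hre : ∑ j ∈ Finset.Icc 1 (m - k),
          ((n - m + j).choose j : ℤ) * Acoef n k (m - j)
        = ∑ i ∈ Icc k (m - 1), ((n - i).choose (m - i) : ℤ) * Acoef n k i := by
      apply Finset.sum_nbij' (fun j => m - j) (fun i => m - i)
      · intro j hj; simp only [mem_Icc] at *; omega
      · intro i hi; simp only [mem_Icc] at *; omega
      · intro j hj; simp only [mem_Icc] at hj; omega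
      · intro i hi; simp only [mem_Icc] at hi; omega
      · intro j hj; simp only [mem_Icc] at hj
        have h1 : n - (m - j) = n - m + j := by omega
        have h2 : m - (m - j) = j := by omega
        rw [h1, h2]
    rw [Nat.sub_self, Nat.choose_zero_right, hAm, hre]
    push_cast
    ring

section Meas
variable {Ω : Type*} [MeasurableSpace Ω] (μ : Measure Ω) {n : ℕ} (X : Fin n → Ω → ℝ) (t : ℝ)

/-- The event that exactly the variables indexed by `s` are `≤ t`. -/
def Eset (s : Finset (Fin n)) : Set Ω :=
  {ω | ∀ i : Fin n, (i ∈ s → X i ω ≤ t) ∧ (i ∉ s → t < X i ω)}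

def Aset (s : Finset (Fin n)) : Set (Fin n → ℝ) :=
  {f | ∀ i : Fin n, (i ∈ s → f i ≤ t) ∧ (i ∉ s → t < f i)}

lemma measurableSet_Aset (s : Finset (Fin n)) : MeasurableSet (Aset t s) := by
  have : Aset t s = ⋂ i : Fin n,
      ({f : Fin n → ℝ | i ∈ s → f i ≤ t} ∩ {f | i ∉ s → t < f i}) := by
    ext f; simp [Aset, Set.mem_iInter, forall_and]
  rw [this]
  refine MeasurableSet.iInter fun i => MeasurableSet.inter ?_ ?_
  · by_cases h : i ∈ s
    · simp only [h, true_implies]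
      exact measurableSet_le (measurable_pi_apply i) measurable_const
    · simp [h]
  · by_cases h : i ∈ s
    · simp [h]
    · simp only [h, not_false_iff, true_implies]
      exact measurableSet_lt measurable_const (measurable_pi_apply i)

lemma Eset_eq_preimage (s : Finset (Fin n)) :
    Eset X t s = (fun ω => fun i => X i ω) ⁻¹' (Aset t s) := rfl

lemma measurableSet_Eset (hmeas : ∀ i, Measurable (X i)) (s : Finset (Fin n)) :
    MeasurableSet (Eset X t s) := by
  rw [Eset_eq_preimage]
  exact (measurable_pi_lambda _ hmeas) (measurableSet_Aset t s)

lemma measure_Eset_card_eq (hmeas : ∀ i, Measurable (X i)) (hexch : Exchangeable μ X)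
    {s s' : Finset (Fin n)} (hcard : s.card = s'.card) :
    μ (Eset X t s) = μ (Eset X t s') := by
  classical
  have hXm : Measurable (fun ω => fun i => X i ω) :=
    measurable_pi_lambda _ hmeas
  have e1 : {x : Fin n // x ∈ s'} ≃ {x : Fin n // x ∈ s} :=
    Fintype.equivOfCardEq (by simp only [Fintype.card_coe]; exact hcard.symm)
  have e2 : {x : Fin n // ¬ x ∈ s'} ≃ {x : Fin n // ¬ x ∈ s} :=
    Fintype.equivOfCardEq (by
      rw [Fintype.card_subtype_compl, Fintype.card_subtype_compl]
      simp only [Fintype.card_coe, hcard])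
  set σ : Equiv.Perm (Fin n) :=
    (Equiv.sumCompl (· ∈ s')).symm.trans ((e1.sumCongr e2).trans (Equiv.sumCompl (· ∈ s)))
    with hσdef
  have hσ : ∀ i : Fin n, i ∈ s' ↔ σ i ∈ s := by
    intro i
    by_cases h : i ∈ s'
    · simp only [hσdef, Equiv.trans_apply, Equiv.sumCompl_symm_apply_of_pos h,
        Equiv.sumCongr_apply, Sum.map_inl, Equiv.sumCompl_apply_inl]
      exact ⟨fun _ => (e1 ⟨i, h⟩).2, fun _ => h⟩
    · simp only [hσdef, Equiv.trans_apply, Equiv.sumCompl_symm_apply_of_neg h,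
        Equiv.sumCongr_apply, Sum.map_inr, Equiv.sumCompl_apply_inr]
      exact ⟨fun hh => absurd hh h, fun hh => absurd hh (e2 ⟨i, h⟩).2⟩
  have hXσm : Measurable (fun ω => fun i => X (σ i) ω) :=
    measurable_pi_lambda _ (fun i => hmeas (σ i))
  have key : μ ((fun ω => fun i => X (σ i) ω) ⁻¹' (Aset t s'))
      = μ ((fun ω => fun i => X i ω) ⁻¹' (Aset t s')) := by
    rw [← Measure.map_apply hXσm (measurableSet_Aset t s'),
      ← Measure.map_apply hXm (measurableSet_Aset t s'), hexch σ]
  have hpre : (fun ω => fun i => X (σ i) ω) ⁻¹' (Aset t s') = Eset X t s := by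
    ext ω
    simp only [Set.mem_preimage, Aset, Set.mem_setOf_eq, Eset]
    constructor
    · intro h j
      have hj2 := h (σ.symm j)
      rw [Equiv.apply_symm_apply] at hj2
      have hmem : σ.symm j ∈ s' ↔ j ∈ s := by
        rw [hσ (σ.symm j), Equiv.apply_symm_apply]
      exact ⟨fun hj => hj2.1 (hmem.mpr hj), fun hj => hj2.2 (fun hc => hj (hmem.mp hc))⟩
    · intro h i
      have hi2 := h (σ i)
      exact ⟨fun hi => hi2.1 ((hσ i).mp hi), fun hi => hi2.2 (fun hc => hi ((hσ i).mpr hc))⟩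
  rw [Eset_eq_preimage X t s', ← key, hpre]

/-- canonical index set `{0, ..., m-1}` inside `Fin n` -/
def low (n m : ℕ) : Finset (Fin n) := Finset.univ.filter (fun i => (i : ℕ) < m)

lemma card_low {m : ℕ} (hm : m ≤ n) : (low n m).card = m := by
  classical
  rw [low, ← Fintype.card_coe]
  have e : {x : Fin n // x ∈ Finset.univ.filter (fun i : Fin n => (i : ℕ) < m)} ≃ Fin m :=
    { toFun := fun x => ⟨x.1.1, by have := x.2; simp only [mem_filter] at this; exact this.2⟩
      invFun := fun j => ⟨⟨j.1, lt_of_lt_of_le j.2 hm⟩, by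
        simp only [mem_filter, Finset.mem_univ, true_and]; exact j.2⟩
      left_inv := fun x => by ext; rfl
      right_inv := fun j => by ext; rfl }
  rw [Fintype.card_congr e, Fintype.card_fin]

lemma measure_Eset_eq_Q (hmeas : ∀ i, Measurable (X i)) (hexch : Exchangeable μ X)
    (s : Finset (Fin n)) :
    μ (Eset X t s) = μ (Eset X t (low n s.card)) := by
  refine measure_Eset_card_eq μ X t hmeas hexch ?_
  rw [card_low]
  exact (Finset.card_le_univ s).trans_eq (by simp)

lemma Pjoint_eq_measure_Eset (m : ℕ) :
    Pjoint μ X m t = (μ (Eset X t (low n m))).toReal := by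
  have hset : {ω | (∀ i : Fin n, (i : ℕ) < m → X i ω ≤ t) ∧ ∀ i : Fin n, m ≤ (i : ℕ) → t < X i ω}
      = Eset X t (low n m) := by
    ext ω
    simp only [Set.mem_setOf_eq, Eset, low, mem_filter, Finset.mem_univ, true_and, not_lt]
    constructor
    · intro h i
      exact ⟨fun hi => h.1 i hi, fun hi => h.2 i hi⟩
    · intro h
      exact ⟨fun i hi => (h i).1 hi, fun i hi => (h i).2 hi⟩
  unfold Pjoint
  rw [hset]

lemma measure_Lset (hmeas : ∀ i, Measurable (X i)) (hexch : Exchangeable μ X)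
    {j : ℕ} (hj : j ≤ n) :
    μ {ω | ∀ i : Fin n, (i : ℕ) < j → X i ω ≤ t}
      = ∑ m ∈ Icc j n, ((n - j).choose (m - j)) • μ (Eset X t (low n m)) := by
  classical
  set S : Finset (Finset (Fin n)) :=
    Finset.univ.powerset.filter (fun s => low n j ⊆ s) with hS
  have hunion : {ω | ∀ i : Fin n, (i : ℕ) < j → X i ω ≤ t} = ⋃ s ∈ S, Eset X t s := by
    ext ω
    simp only [Set.mem_setOf_eq, Set.mem_iUnion, exists_prop]
    constructor
    · intro h
      refine ⟨Finset.univ.filter (fun i => X i ω ≤ t), ?_, ?_⟩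
      · simp only [hS, mem_filter, Finset.mem_powerset, Finset.subset_univ, true_and]
        intro i hi
        simp only [low, mem_filter, mem_univ, true_and] at hi
        simp only [mem_filter, mem_univ, true_and]
        exact h i hi
      · intro i
        simp only [mem_filter, mem_univ, true_and]
        exact ⟨fun hi => hi, fun hi => not_le.mp hi⟩
    · rintro ⟨s, hs, hω⟩ i hi
      simp only [hS, mem_filter] at hs
      exact (hω i).1 (hs.2 (by simp [low, hi]))
  have hdisj : (S : Set (Finset (Fin n))).PairwiseDisjoint (Eset X t) := by
    intro s hs s' hs' hne
    refine Set.disjoint_left.mpr fun ω h1 h2 => hne ?_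
    ext i
    constructor
    · intro h
      by_contra hc
      exact absurd ((h1 i).1 h) (not_le.mpr ((h2 i).2 hc))
    · intro h
      by_contra hc
      exact absurd ((h2 i).1 h) (not_le.mpr ((h1 i).2 hc))
  rw [hunion, measure_biUnion_finset hdisj (fun s _ => measurableSet_Eset X t hmeas s)]
  have hstep1 : ∑ s ∈ S, μ (Eset X t s) = ∑ s ∈ S, μ (Eset X t (low n s.card)) :=
    Finset.sum_congr rfl (fun s _ => measure_Eset_eq_Q μ X t hmeas hexch s)
  rw [hstep1]
  have hstep2 : ∑ s ∈ S, μ (Eset X t (low n s.card))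
      = ∑ u ∈ ((low n j)ᶜ).powerset, μ (Eset X t (low n (u.card + j))) := by
    apply Finset.sum_nbij' (fun s => s \ low n j) (fun u => u ∪ low n j)
    · intro s hs
      simp only [hS, mem_filter, Finset.mem_powerset] at hs ⊢
      intro x hx
      simp only [Finset.mem_sdiff] at hx
      simpa using hx.2
    · intro u hu
      simp only [hS, mem_filter, Finset.mem_powerset]
      exact ⟨Finset.subset_univ _, Finset.subset_union_right⟩
    · intro s hs
      simp only [hS, mem_filter, Finset.mem_powerset] at hs
      exact Finset.sdiff_union_of_subset hs.2
    · intro u hu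
      simp only [Finset.mem_powerset] at hu
      rw [Finset.union_sdiff_right]
      refine Finset.sdiff_eq_self_of_disjoint ?_
      exact Finset.disjoint_left.mpr fun x hx => by
        have := hu hx; simpa using this
    · intro s hs
      simp only [hS, mem_filter, Finset.mem_powerset] at hs
      have h1 := Finset.card_sdiff_add_card_eq_card hs.2
      rw [card_low hj] at h1
      rw [← h1]
  rw [hstep2]
  have hcardc : ((low n j)ᶜ : Finset (Fin n)).card = n - j := by
    rw [Finset.card_compl, card_low hj, Fintype.card_fin]
  erw [Finset.powerset_card_disjiUnion, Finset.sum_disjiUnion]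
  have hstep3 : ∀ c ∈ Finset.range (((low n j)ᶜ : Finset (Fin n)).card + 1),
      ∑ u ∈ Finset.powersetCard c ((low n j)ᶜ), μ (Eset X t (low n (u.card + j)))
        = ((n - j).choose c) • μ (Eset X t (low n (c + j))) := by
    intro c _
    rw [Finset.sum_congr rfl (fun u hu => by
      rw [(Finset.mem_powersetCard.mp hu).2]), Finset.sum_const,
      Finset.card_powersetCard, hcardc]
  rw [Finset.sum_congr rfl hstep3]
  apply Finset.sum_nbij' (fun c => c + j) (fun m => m - j)
  · intro c hc
    simp only [Finset.mem_range, hcardc] at hc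
    simp only [mem_Icc]
    omega
  · intro m hm
    simp only [mem_Icc] at hm
    simp only [Finset.mem_range, hcardc]
    omega
  · intro c hc; omega
  · intro m hm
    simp only [mem_Icc] at hm
    omega
  · intro c hc
    simp only [Finset.mem_range, hcardc] at hc
    congr 2
    omega

lemma Pmax_eq_sum (μ : Measure Ω) [IsProbabilityMeasure μ] (hmeas : ∀ i, Measurable (X i))
    (hexch : Exchangeable μ X) {j : ℕ} (hj : j ≤ n) :
    Pmax μ X j t = ∑ m ∈ Icc j n, ((n - j).choose (m - j) : ℝ) * Pjoint μ X m t := by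
  unfold Pmax
  rw [measure_Lset μ X t hmeas hexch hj, ENNReal.toReal_sum]
  · refine Finset.sum_congr rfl fun m _ => ?_
    rw [Pjoint_eq_measure_Eset, nsmul_eq_mul, ENNReal.toReal_mul, ENNReal.toReal_natCast]
  · intro m _
    rw [nsmul_eq_mul]
    exact ENNReal.mul_ne_top (by simp) (measure_ne_top μ _)

end Meas

/-- For `n` exchangeable random variables, `P_{n,k} = ∑_{i=k}^{n} A^{n,k}_i · P_i`. -/
theorem pjoint_eq_linear_comb {Ω : Type*} [MeasurableSpace Ω] (μ : Measure Ω)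
    [IsProbabilityMeasure μ] {n : ℕ} (X : Fin n → Ω → ℝ) (hmeas : ∀ i, Measurable (X i))
    (hexch : Exchangeable μ X) (k : ℕ) (hk : 1 ≤ k) (hkn : k ≤ n) (t : ℝ) :
    Pjoint μ X k t = ∑ i ∈ Finset.Icc k n, (Acoef n k i : ℝ) * Pmax μ X i t := by
  classical
  rw [Finset.sum_congr rfl (fun i hi => by
    rw [Pmax_eq_sum X t μ hmeas hexch (mem_Icc.mp hi).2])]
  have hswap : ∑ i ∈ Icc k n, (Acoef n k i : ℝ)
        * ∑ m ∈ Icc i n, ((n - i).choose (m - i) : ℝ) * Pjoint μ X m t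
      = ∑ m ∈ Icc k n,
          (∑ i ∈ Icc k m, ((n - i).choose (m - i) : ℝ) * (Acoef n k i : ℝ))
            * Pjoint μ X m t := by
    simp_rw [Finset.mul_sum, Finset.sum_mul]
    have hIcc : ∀ a b : ℕ, Icc a b = Ico a (b + 1) := fun a b => by
      rw [Finset.Ico_add_one_right_eq_Icc]
    rw [hIcc k n, Finset.sum_congr rfl (fun i _ => by rw [hIcc i n]),
      Finset.sum_Ico_Ico_comm]
    refine Finset.sum_congr rfl fun m _ => ?_
    rw [hIcc k m]
    exact Finset.sum_congr rfl fun i _ => by ring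
  rw [hswap]
  have horth : ∀ m ∈ Icc k n,
      (∑ i ∈ Icc k m, ((n - i).choose (m - i) : ℝ) * (Acoef n k i : ℝ))
        = if m = k then 1 else 0 := by
    intro m hm
    obtain ⟨h1, h2⟩ := mem_Icc.mp hm
    have horthZ := Acoef_orth n k m h1 h2
    have hcast : (∑ i ∈ Icc k m, ((n - i).choose (m - i) : ℝ) * (Acoef n k i : ℝ))
        = ((∑ i ∈ Icc k m, ((n - i).choose (m - i) : ℤ) * Acoef n k i : ℤ) : ℝ) := by
      push_cast
      rfl
    rw [hcast, horthZ]
    split_ifs <;> simp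
  rw [Finset.sum_congr rfl (fun m hm => by rw [horth m hm])]
  rw [Finset.sum_eq_single k]
  · rw [if_pos rfl, one_mul]
  · intro m _ hm
    rw [if_neg hm, zero_mul]
  · intro hkk
    exact absurd (mem_Icc.mpr ⟨le_refl k, hkn⟩) hkk
end

section
/- For n exchangeable random variables, the CDF of the k-th order statistic is a fixed linear combination of the CDFs of maxima of sub-families: F_{n,k}(t) = Σ_{i=k}^{n} W^{n,k}_i · P_i(t), where W^{n,k}_i = Σ_{j=k}^{i} C(n, j) · A^{n,j}_i, P_i(t) = P(X_1 ≤ t, ..., X_i ≤ t), and A^{n,j}_i is defined by the recurrence A^{n,j}_j = 1, A^{n,j}_i = −Σ_{l=1}^{i−j} C(n−i+l, l) · A^{n,j}_{i−l}. -/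
open MeasureTheory Finset
open scoped ENNReal

/-- The `W` coefficients: `W^{n,k}_i = ∑_{j=k}^{i} C(n,j) · A^{n,j}_i`. -/
def Wcoef (n k i : ℕ) : ℤ := ∑ j ∈ Finset.Icc k i, (n.choose j : ℤ) * Acoef n j i

open scoped Classical in
/-- `F_{n,k}(t)`: the probability that at least `k` of the `n` variables are `≤ t`,
i.e. the CDF of the `k`-th smallest order statistic. -/
noncomputable def Fos {Ω : Type*} [MeasurableSpace Ω] (μ : MeasureTheory.Measure Ω) {n : ℕ}
    (X : Fin n → Ω → ℝ) (k : ℕ) (t : ℝ) : ℝ :=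
  (μ {ω | k ≤ (Finset.univ.filter fun i : Fin n => X i ω ≤ t).card}).toReal

lemma neg_one_pow_split {a b : ℕ} (h : b ≤ a) : ((-1 : ℤ))^a = (-1)^b * (-1)^(a-b) := by
  rw [← pow_add, Nat.add_sub_cancel' h]

/-- partial alternating row sum -/
lemma partial_alt_sum {i : ℕ} (hi : 1 ≤ i) :
    ∀ k : ℕ, 1 ≤ k →
      ∑ j ∈ range k, (-1 : ℤ)^j * i.choose j = (-1)^(k-1) * ((i-1).choose (k-1)) := by
  intro k hk
  induction k with
  | zero => omega
  | succ k ih =>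
    rcases Nat.lt_or_ge 1 (k+1) with h | h
    · have hk1 : 1 ≤ k := by omega
      rw [Finset.sum_range_succ, ih hk1]
      obtain ⟨k', rfl⟩ : ∃ k', k = k' + 1 := ⟨k-1, by omega⟩
      obtain ⟨i', rfl⟩ : ∃ i', i = i' + 1 := ⟨i-1, by omega⟩
      simp only [Nat.add_sub_cancel]
      rw [Nat.choose_succ_succ i' k']
      push_cast
      ring
    · have : k = 0 := by omega
      subst this
      simp

/-- full alternating row sum against a fixed lower choose -/
lemma alt_row {m r : ℕ} (h : r < m) :
    ∑ j ∈ range (m+1), (-1:ℤ)^j * (m.choose j) * (j.choose r) = 0 := by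
  have hsub : Finset.Icc r m ⊆ range (m+1) := by
    intro x hx; simp only [mem_Icc] at hx; simp; omega
  rw [← Finset.sum_subset hsub (by
    intro x hx hx'
    simp only [mem_range] at hx
    simp only [mem_Icc, not_and, not_le] at hx'
    have : x < r := by omega
    simp [Nat.choose_eq_zero_of_lt this])]
  have : ∀ j ∈ Finset.Icc r m,
      (-1:ℤ)^j * (m.choose j) * (j.choose r)
        = (m.choose r : ℤ) * ((-1)^r * ((-1)^(j-r) * ((m-r).choose (j-r)))) := by
    intro j hj
    simp only [mem_Icc] at hj
    have key : (m.choose j : ℤ) * (j.choose r) = (m.choose r : ℤ) * ((m-r).choose (j-r)) := by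
      exact_mod_cast congrArg (Nat.cast : ℕ → ℤ) (Nat.choose_mul hj.1)
    have hsign : (-1:ℤ)^j = (-1)^r * (-1)^(j-r) := neg_one_pow_split hj.1
    calc (-1:ℤ)^j * (m.choose j) * (j.choose r)
        = (-1:ℤ)^j * ((m.choose j : ℤ) * (j.choose r)) := by ring
      _ = (-1:ℤ)^j * ((m.choose r : ℤ) * ((m-r).choose (j-r))) := by rw [key]
      _ = _ := by rw [hsign]; ring
  rw [Finset.sum_congr rfl this, ← Finset.mul_sum, ← Finset.mul_sum]
  have : ∑ j ∈ Finset.Icc r m, (-1:ℤ)^(j-r) * ((m-r).choose (j-r))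
      = ∑ d ∈ range (m-r+1), (-1:ℤ)^d * ((m-r).choose d) := by
    rw [← Finset.Ico_add_one_right_eq_Icc, Finset.sum_Ico_eq_sum_range]
    apply Finset.sum_congr (by congr 1; omega)
    intro d _
    have h1 : r + d - r = d := by omega
    rw [h1]
  rw [this, Int.alternating_sum_range_choose_of_ne (by omega), mul_zero, mul_zero]

lemma Acoef_eq (n j : ℕ) : ∀ i, j ≤ i → i ≤ n →
    Acoef n j i = (-1:ℤ)^(i-j) * ((n-j).choose (i-j)) := by
  intro i
  induction i using Nat.strong_induction_on with
  | _ i IH =>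
    intro hji hin
    rcases Nat.eq_or_lt_of_le hji with rfl | hlt
    · rw [Acoef]; simp
    · rw [Acoef]
      rw [if_neg (by omega)]
      rw [Finset.sum_attach (Finset.Icc 1 (i-j))
        (fun l => ((n - i + l).choose l : ℤ) * Acoef n j (i - l))]
      have hrw : ∀ l ∈ Finset.Icc 1 (i-j),
          ((n - i + l).choose l : ℤ) * Acoef n j (i - l)
            = ((n - i + l).choose l : ℤ) * ((-1)^(i-l-j) * ((n-j).choose (i-l-j))) := by
        intro l hl
        simp only [mem_Icc] at hl
        rw [IH (i-l) (by omega) (by omega) (by omega)]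
      rw [Finset.sum_congr rfl hrw]
      -- now a pure binomial identity
      set d := i - j with hd
      have hd1 : 1 ≤ d := by omega
      -- reindex l = d - s
      have key : ∑ l ∈ Finset.Icc 1 d,
          ((n - i + l).choose l : ℤ) * ((-1)^(i-l-j) * ((n-j).choose (i-l-j)))
          = ∑ s ∈ range d, (-1:ℤ)^s * (((n-j).choose d : ℤ) * ((d).choose s)) := by
        rw [← Finset.Ico_add_one_right_eq_Icc, Finset.sum_Ico_eq_sum_range]
        rw [← Finset.sum_range_reflect]
        apply Finset.sum_congr rfl
        intro s hs
        simp only [Nat.succ_sub_one, Nat.add_sub_cancel, mem_range] at hs ⊢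
        have hs' : s < d := by omega
        -- l = 1 + (d - 1 - s) = d - s
        have hl : 1 + (d - 1 - s) = d - s := by omega
        rw [hl]
        have h1 : n - i + (d - s) = n - j - s := by omega
        have h2 : i - (d - s) - j = s := by omega
        rw [h1, h2]
        have hcm : (n-j).choose d * d.choose s = (n-j).choose s * ((n-j-s).choose (d-s)) := by
          exact Nat.choose_mul (by omega)
        have : ((n - j - s).choose (d - s) : ℤ) * ((-1)^s * ((n-j).choose s))
            = (-1:ℤ)^s * (((n-j).choose d : ℤ) * (d.choose s)) := by
          have := congrArg (Nat.cast : ℕ → ℤ) hcm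
          push_cast at this
          rw [this]; ring
        -- goal should be: C(n-j-s, d-s) * ((-1)^s * C(n-j, s)) = ...
        convert this using 2
      rw [key]
      have total : ∑ s ∈ range (d+1), (-1:ℤ)^s * (((n-j).choose d : ℤ) * ((d).choose s)) = 0 := by
        have := Int.alternating_sum_range_choose_of_ne (n := d) (by omega)
        calc ∑ s ∈ range (d+1), (-1:ℤ)^s * (((n-j).choose d : ℤ) * ((d).choose s))
            = ((n-j).choose d : ℤ) * ∑ s ∈ range (d+1), (-1:ℤ)^s * ((d).choose s) := by
              rw [Finset.mul_sum]; apply Finset.sum_congr rfl; intro s _; ring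
          _ = 0 := by rw [this, mul_zero]
      rw [Finset.sum_range_succ] at total
      have : ∑ s ∈ range d, (-1:ℤ)^s * (((n-j).choose d : ℤ) * ((d).choose s))
          = -((-1:ℤ)^d * (((n-j).choose d : ℤ) * ((d).choose d))) := by linarith
      rw [this]
      simp

lemma Wcoef_eq {n k i : ℕ} (hk : 1 ≤ k) (hki : k ≤ i) (hin : i ≤ n) :
    Wcoef n k i = (-1:ℤ)^(i-k) * ((i-1).choose (k-1)) * (n.choose i) := by
  unfold Wcoef
  have h1 : ∀ j ∈ Finset.Icc k i, (n.choose j : ℤ) * Acoef n j i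
      = (n.choose i : ℤ) * ((-1)^(i-j) * (i.choose j)) := by
    intro j hj
    simp only [mem_Icc] at hj
    rw [Acoef_eq n j i hj.2 hin]
    have := congrArg (Nat.cast : ℕ → ℤ) (Nat.choose_mul (n := n) hj.2)
    push_cast at this
    linear_combination (-(-1:ℤ)^(i-j)) * this
  rw [Finset.sum_congr rfl h1, ← Finset.mul_sum]
  have h2 : ∑ j ∈ Finset.Icc k i, (-1:ℤ)^(i-j) * (i.choose j)
      = (-1:ℤ)^(i-k) * ((i-1).choose (k-1)) := by
    have hsplit : ∑ j ∈ range (i+1), (-1:ℤ)^j * (i.choose j)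
        = ∑ j ∈ range k, (-1:ℤ)^j * (i.choose j) + ∑ j ∈ Finset.Icc k i, (-1:ℤ)^j * (i.choose j) := by
      have hIccIco : Finset.Icc k i = Finset.Ico k (i+1) := by
        ext x; simp [Nat.lt_succ_iff]
      rw [hIccIco, Finset.range_eq_Ico, Finset.range_eq_Ico]
      exact (Finset.sum_Ico_consecutive (fun j => (-1:ℤ)^j * (i.choose j)) (m := 0) (n := k) (k := i+1) (by omega) (by omega)).symm
    have htot := Int.alternating_sum_range_choose_of_ne (n := i) (by omega)
    have hpart := partial_alt_sum (i := i) (by omega) k hk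
    have hIcc : ∑ j ∈ Finset.Icc k i, (-1:ℤ)^j * (i.choose j)
        = -((-1:ℤ)^(k-1) * ((i-1).choose (k-1))) := by
      rw [hsplit, hpart] at htot; linarith
    -- LHS: factor (-1)^i
    have : ∀ j ∈ Finset.Icc k i, (-1:ℤ)^(i-j) * (i.choose j)
        = (-1)^i * ((-1)^j * (i.choose j)) := by
      intro j hj
      simp only [mem_Icc] at hj
      have := neg_one_pow_split (a := i) (b := j) hj.2
      have hjj : (-1:ℤ)^(i-j) * ((-1:ℤ)^j * (-1:ℤ)^j) = (-1)^i * (-1)^j := by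
        rw [← mul_assoc, mul_comm ((-1:ℤ)^(i-j)) _, this]
      have hsq : (-1:ℤ)^j * (-1:ℤ)^j = 1 := by
        rw [← pow_add, ← two_mul, pow_mul]; norm_num
      rw [hsq, mul_one] at hjj
      rw [hjj]; ring
    rw [Finset.sum_congr rfl this, ← Finset.mul_sum, hIcc]
    have h3 : (-1:ℤ)^i * -(-1:ℤ)^(k-1) = (-1)^(i-k) := by
      have h4 : (-1:ℤ)^i = (-1)^k * (-1)^(i-k) := neg_one_pow_split hki
      have h5 : (-1:ℤ)^k = -(-1:ℤ)^(k-1) := by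
        obtain ⟨k', rfl⟩ : ∃ k', k = k' + 1 := ⟨k-1, by omega⟩
        simp [pow_succ]
      have hsq : (-1:ℤ)^(k-1) * (-1:ℤ)^(k-1) = 1 := by
        rw [← pow_add, ← two_mul, pow_mul]; norm_num
      calc (-1:ℤ)^i * -(-1:ℤ)^(k-1)
          = ((-1:ℤ)^(k-1) * (-1:ℤ)^(k-1)) * (-1:ℤ)^(i-k) := by rw [h4, h5]; ring
        _ = (-1:ℤ)^(i-k) := by rw [hsq, one_mul]
    linear_combination (((i-1).choose (k-1) : ℤ)) * h3
  rw [h2]; ring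

lemma indicator_sum_eq {n k : ℕ} (hk : 1 ≤ k) : ∀ m : ℕ, m ≤ n →
    (if k ≤ m then (1:ℤ) else 0)
      = ∑ i ∈ Finset.Icc k n, (-1:ℤ)^(i-k) * ((i-1).choose (k-1)) * (m.choose i) := by
  -- first reduce to Icc k m
  have hred : ∀ m : ℕ, m ≤ n → ∑ i ∈ Finset.Icc k n, (-1:ℤ)^(i-k) * ((i-1).choose (k-1)) * (m.choose i)
      = ∑ i ∈ Finset.Icc k m, (-1:ℤ)^(i-k) * ((i-1).choose (k-1)) * (m.choose i) := by
    intro m hm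
    rw [Finset.sum_subset (Finset.Icc_subset_Icc_right hm)]
    intro x hx hx'
    simp only [mem_Icc] at hx hx'
    have : m < x := by omega
    simp [Nat.choose_eq_zero_of_lt this]
  intro m hm
  rw [hred m hm]
  clear hred hm
  induction m with
  | zero =>
    rw [if_neg (by omega)]
    rw [Finset.Icc_eq_empty (by omega)]
    simp
  | succ m ih =>
    rcases Nat.lt_or_ge (m+1) k with h | h
    · rw [if_neg (by omega), Finset.Icc_eq_empty (by omega)]; simp
    · rw [if_pos (by omega)]
      rcases Nat.eq_or_lt_of_le h with heq | hlt
      · -- m+1 = k : single term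
        rw [← heq]
        rw [Finset.Icc_self, Finset.sum_singleton]
        simp
      · -- k ≤ m
        have hkm : k ≤ m := by omega
        have ihv : ∑ i ∈ Finset.Icc k m, (-1:ℤ)^(i-k) * ((i-1).choose (k-1)) * (m.choose i) = 1 := by
          rw [← ih]; rw [if_pos hkm]
        -- Pascal split
        have hpas : ∀ i ∈ Finset.Icc k (m+1),
            (-1:ℤ)^(i-k) * ((i-1).choose (k-1)) * ((m+1).choose i)
              = (-1:ℤ)^(i-k) * ((i-1).choose (k-1)) * (m.choose i)
                + (-1:ℤ)^(i-k) * ((i-1).choose (k-1)) * (m.choose (i-1)) := by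
          intro i hi
          simp only [mem_Icc] at hi
          obtain ⟨i', rfl⟩ : ∃ i', i = i' + 1 := ⟨i-1, by omega⟩
          rw [Nat.choose_succ_succ m i']
          push_cast
          ring
        rw [Finset.sum_congr rfl hpas, Finset.sum_add_distrib]
        -- first sum = ihv (extra top term is 0)
        have hfirst : ∑ i ∈ Finset.Icc k (m+1), (-1:ℤ)^(i-k) * ((i-1).choose (k-1)) * (m.choose i)
            = ∑ i ∈ Finset.Icc k m, (-1:ℤ)^(i-k) * ((i-1).choose (k-1)) * (m.choose i) := by
          rw [← Finset.sum_subset (Finset.Icc_subset_Icc_right (by omega : m ≤ m+1))]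
          intro x hx hx'
          simp only [mem_Icc] at hx hx'
          have : m < x := by omega
          simp [Nat.choose_eq_zero_of_lt this]
        rw [hfirst, ihv]
        -- second sum = 0
        have hsecond : ∑ i ∈ Finset.Icc k (m+1), (-1:ℤ)^(i-k) * ((i-1).choose (k-1)) * (m.choose (i-1))
            = 0 := by
          -- reindex j = i - 1 over Icc (k-1) m
          have hre : ∑ i ∈ Finset.Icc k (m+1), (-1:ℤ)^(i-k) * ((i-1).choose (k-1)) * (m.choose (i-1))
              = ∑ j ∈ Finset.Icc (k-1) m, (-1:ℤ)^(j+1-k) * ((j).choose (k-1)) * (m.choose j) := by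
            rw [← Finset.Ico_add_one_right_eq_Icc, ← Finset.Ico_add_one_right_eq_Icc, Finset.sum_Ico_eq_sum_range,
                Finset.sum_Ico_eq_sum_range]
            apply Finset.sum_congr (by congr 1; omega)
            intro x _
            have h1 : k + x - 1 = k - 1 + x := by omega
            have h2 : k + x - k = x := by omega
            have h3 : k - 1 + x + 1 - k = x := by omega
            rw [h1, h2, h3]
          rw [hre]
          -- extend to range (m+1); lower terms vanish
          have hext : ∑ j ∈ Finset.Icc (k-1) m, (-1:ℤ)^(j+1-k) * ((j).choose (k-1)) * (m.choose j)
              = ∑ j ∈ range (m+1), (-1:ℤ)^(j+1-k) * ((j).choose (k-1)) * (m.choose j) := by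
            have hsub2 : Finset.Icc (k-1) m ⊆ range (m+1) := fun x hx => by
              simp only [mem_Icc] at hx; simp only [mem_range]; omega
            rw [Finset.sum_subset hsub2]
            intro x hx hx'
            simp only [mem_Icc, mem_range, not_and, not_le] at hx hx'
            have : x < k - 1 := by omega
            simp [Nat.choose_eq_zero_of_lt this]
          rw [hext]
          have hz := alt_row (m := m) (r := k-1) (by omega)
          have hc : ∀ j ∈ range (m+1), (-1:ℤ)^(j+1-k) * ((j).choose (k-1)) * (m.choose j)
              = (-1:ℤ)^(k-1) * ((-1:ℤ)^j * (m.choose j) * (j.choose (k-1))) := by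
            intro j hj
            rcases Nat.lt_or_ge j (k-1) with hj' | hj'
            · simp [Nat.choose_eq_zero_of_lt hj']
            · have : j + 1 - k = j - (k-1) := by omega
              rw [this]
              have h4 : (-1:ℤ)^j = (-1)^(k-1) * (-1)^(j-(k-1)) := neg_one_pow_split hj'
              rw [h4]
              have hsq : (-1:ℤ)^(k-1) * (-1:ℤ)^(k-1) = 1 := by
                rw [← pow_add, ← two_mul, pow_mul]; norm_num
              calc (-1:ℤ)^(j-(k-1)) * ((j).choose (k-1)) * (m.choose j)
                  = ((-1:ℤ)^(k-1) * (-1:ℤ)^(k-1)) * ((-1:ℤ)^(j-(k-1)) * ((j).choose (k-1)) * (m.choose j)) := by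
                    rw [hsq]; ring
                _ = _ := by ring
          rw [Finset.sum_congr rfl hc, ← Finset.mul_sum]
          have : ∑ j ∈ range (m+1), (-1:ℤ)^j * (m.choose j) * (j.choose (k-1)) = 0 := hz
          rw [this, mul_zero]
        rw [hsecond, add_zero]

open scoped Classical in
/-- The random finset of indices whose value is `≤ t`. -/
noncomputable def FsetP {Ω : Type*} {n : ℕ} (X : Fin n → Ω → ℝ) (t : ℝ) (ω : Ω) :
    Finset (Fin n) :=
  Finset.univ.filter fun i : Fin n => X i ω ≤ t

section Prob

variable {Ω : Type*} [MeasurableSpace Ω] (μ : Measure Ω) {n : ℕ} (X : Fin n → Ω → ℝ)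

lemma measurableSet_eqEvent (hmeas : ∀ i, Measurable (X i)) (t : ℝ) (T : Finset (Fin n)) :
    MeasurableSet {ω | FsetP X t ω = T} := by
  classical
  have h : {ω | FsetP X t ω = T} = ⋂ i : Fin n, {ω | X i ω ≤ t ↔ i ∈ T} := by
    ext ω
    simp only [Set.mem_setOf_eq, Set.mem_iInter, FsetP, Finset.ext_iff, mem_filter, mem_univ,
      true_and]
  rw [h]
  apply MeasurableSet.iInter
  intro i
  by_cases hi : i ∈ T
  · have : {ω | X i ω ≤ t ↔ i ∈ T} = X i ⁻¹' Set.Iic t := by ext ω; simp [hi]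
    rw [this]; exact (hmeas i) measurableSet_Iic
  · have : {ω | X i ω ≤ t ↔ i ∈ T} = (X i ⁻¹' Set.Iic t)ᶜ := by ext ω; simp [hi]
    rw [this]; exact ((hmeas i) measurableSet_Iic).compl

lemma measure_partition (hmeas : ∀ i, Measurable (X i)) (t : ℝ)
    (p : Finset (Fin n) → Prop) [DecidablePred p] :
    μ {ω | p (FsetP X t ω)} = ∑ T ∈ univ.filter p, μ {ω | FsetP X t ω = T} := by
  classical
  have h : {ω | p (FsetP X t ω)} = ⋃ T ∈ univ.filter p, {ω | FsetP X t ω = T} := by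
    ext ω
    simp only [Set.mem_setOf_eq, Set.mem_iUnion, mem_filter, mem_univ, true_and]
    constructor
    · intro h; exact ⟨_, h, rfl⟩
    · rintro ⟨T, hT, hE⟩; rw [hE]; exact hT
  rw [h]
  rw [measure_biUnion_finset ?_ (fun T _ => measurableSet_eqEvent X hmeas t T)]
  intro T hT T' hT' hne
  simp only [Function.onFun]
  rw [Set.disjoint_left]
  intro ω h1 h2
  simp only [Set.mem_setOf_eq] at h1 h2
  exact hne (h1 ▸ h2 ▸ rfl)

lemma exch_prefix (hmeas : ∀ i, Measurable (X i)) (hexch : Exchangeable μ X) (t : ℝ)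
    {i : ℕ} (hi : i ≤ n) (S : Finset (Fin n)) (hS : S.card = i) :
    μ {ω | ∀ s ∈ S, X s ω ≤ t} = μ {ω | ∀ j : Fin n, (j : ℕ) < i → X j ω ≤ t} := by
  classical
  let e1 : Fin i ≃ {x : Fin n // (x : ℕ) < i} :=
    { toFun := fun j => ⟨⟨j.1, lt_of_lt_of_le j.2 hi⟩, j.2⟩
      invFun := fun x => ⟨x.1.1, x.2⟩
      left_inv := fun j => rfl
      right_inv := fun x => rfl }
  let e2 : Fin i ≃ {x : Fin n // x ∈ S} := (S.orderIsoOfFin hS).toEquiv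
  let e : {x : Fin n // (x : ℕ) < i} ≃ {x : Fin n // x ∈ S} := e1.symm.trans e2
  let σ : Equiv.Perm (Fin n) := e.extendSubtype
  have hmap : ∀ x : Fin n, (x : ℕ) < i → σ x ∈ S := fun x hx => e.extendSubtype_mem x hx
  have hcard : (univ.filter fun x : Fin n => (x : ℕ) < i).card = i := by
    have himg2 : (univ : Finset (Fin i)).image (Fin.castLE hi)
        = univ.filter fun x : Fin n => (x : ℕ) < i := by
      ext x
      simp only [mem_image, mem_univ, true_and, mem_filter]
      constructor
      · rintro ⟨a, rfl⟩; exact a.2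
      · intro hx; exact ⟨⟨x.1, hx⟩, rfl⟩
    rw [← himg2, Finset.card_image_of_injective _ (Fin.castLE_injective hi), card_univ,
      Fintype.card_fin]
  have himg : (univ.filter fun x : Fin n => (x : ℕ) < i).image σ = S := by
    apply Finset.eq_of_subset_of_card_le
    · intro y hy
      simp only [mem_image, mem_filter, mem_univ, true_and] at hy
      obtain ⟨x, hx, rfl⟩ := hy
      exact hmap x hx
    · rw [Finset.card_image_of_injective _ σ.injective, hcard, hS]
  have hset1 : {ω | ∀ j : Fin n, (j : ℕ) < i → X (σ j) ω ≤ t} = {ω | ∀ s ∈ S, X s ω ≤ t} := by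
    ext ω
    simp only [Set.mem_setOf_eq]
    constructor
    · intro h s hs
      rw [← himg] at hs
      simp only [mem_image, mem_filter, mem_univ, true_and] at hs
      obtain ⟨x, hx, rfl⟩ := hs
      exact h x hx
    · intro h x hx
      exact h (σ x) (hmap x hx)
  have hXmeas : Measurable fun ω => fun j : Fin n => X j ω :=
    measurable_pi_lambda _ hmeas
  have hXmeas' : Measurable fun ω => fun j : Fin n => X (σ j) ω :=
    measurable_pi_lambda _ (fun j => hmeas (σ j))
  have hB : MeasurableSet {f : Fin n → ℝ | ∀ j : Fin n, (j : ℕ) < i → f j ≤ t} := by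
    have h : {f : Fin n → ℝ | ∀ j : Fin n, (j : ℕ) < i → f j ≤ t}
        = ⋂ j : Fin n, ⋂ (_ : (j : ℕ) < i), (fun f : Fin n → ℝ => f j) ⁻¹' Set.Iic t := by
      ext f; simp
    rw [h]
    exact MeasurableSet.iInter fun j => MeasurableSet.iInter fun _ =>
      (measurable_pi_apply j) measurableSet_Iic
  have h1 := congrArg
    (fun m : Measure (Fin n → ℝ) => m {f | ∀ j : Fin n, (j : ℕ) < i → f j ≤ t}) (hexch σ)
  simp only [Measure.map_apply hXmeas' hB, Measure.map_apply hXmeas hB] at h1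
  have hpre1 : (fun ω => fun j : Fin n => X (σ j) ω) ⁻¹'
      {f | ∀ j : Fin n, (j : ℕ) < i → f j ≤ t}
      = {ω | ∀ j : Fin n, (j : ℕ) < i → X (σ j) ω ≤ t} := rfl
  have hpre2 : (fun ω => fun j : Fin n => X j ω) ⁻¹'
      {f | ∀ j : Fin n, (j : ℕ) < i → f j ≤ t}
      = {ω | ∀ j : Fin n, (j : ℕ) < i → X j ω ≤ t} := rfl
  rw [hpre1, hpre2, hset1] at h1
  exact h1

lemma count_eq (hmeas : ∀ i, Measurable (X i)) (hexch : Exchangeable μ X) (t : ℝ)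
    {i : ℕ} (hi : i ≤ n) :
    (n.choose i : ℝ≥0∞) * μ {ω | ∀ j : Fin n, (j : ℕ) < i → X j ω ≤ t}
      = ∑ T ∈ (univ : Finset (Finset (Fin n))),
          (T.card.choose i : ℝ≥0∞) * μ {ω | FsetP X t ω = T} := by
  classical
  have step2 : ∀ S : Finset (Fin n), μ {ω | ∀ s ∈ S, X s ω ≤ t}
      = ∑ T ∈ univ.filter (fun T => S ⊆ T), μ {ω | FsetP X t ω = T} := by
    intro S
    have h : {ω | ∀ s ∈ S, X s ω ≤ t} = {ω | S ⊆ FsetP X t ω} := by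
      ext ω
      simp only [Set.mem_setOf_eq, FsetP, Finset.subset_iff, mem_filter, mem_univ, true_and]
    rw [h]
    exact measure_partition μ X hmeas t (fun T => S ⊆ T)
  calc (n.choose i : ℝ≥0∞) * μ {ω | ∀ j : Fin n, (j : ℕ) < i → X j ω ≤ t}
      = ∑ S ∈ univ.powersetCard i, μ {ω | ∀ s ∈ S, X s ω ≤ t} := by
        rw [Finset.sum_congr rfl (fun S hS => exch_prefix μ X hmeas hexch t hi S
          (Finset.mem_powersetCard.mp hS).2)]
        rw [Finset.sum_const, Finset.card_powersetCard, card_univ, Fintype.card_fin,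
          nsmul_eq_mul]
    _ = ∑ S ∈ univ.powersetCard i, ∑ T ∈ (univ : Finset (Finset (Fin n))),
          (if S ⊆ T then μ {ω | FsetP X t ω = T} else 0) := by
        apply Finset.sum_congr rfl
        intro S _
        rw [step2 S, Finset.sum_filter]
    _ = ∑ T ∈ (univ : Finset (Finset (Fin n))), ∑ S ∈ univ.powersetCard i,
          (if S ⊆ T then μ {ω | FsetP X t ω = T} else 0) := Finset.sum_comm
    _ = ∑ T ∈ (univ : Finset (Finset (Fin n))),
          (T.card.choose i : ℝ≥0∞) * μ {ω | FsetP X t ω = T} := by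
        apply Finset.sum_congr rfl
        intro T _
        rw [← Finset.sum_filter]
        have hfilt : (univ.powersetCard i).filter (fun S => S ⊆ T) = T.powersetCard i := by
          ext S
          simp only [mem_filter, Finset.mem_powersetCard]
          constructor
          · rintro ⟨⟨-, h2⟩, h3⟩; exact ⟨h3, h2⟩
          · rintro ⟨h1, h2⟩; exact ⟨⟨Finset.subset_univ S, h2⟩, h1⟩
        rw [hfilt, Finset.sum_const, Finset.card_powersetCard, nsmul_eq_mul]

end Prob

/-- Linear transformation of order statistics: for `n` exchangeable random variables,
`F_{n,k}(t) = ∑_{i=k}^{n} W^{n,k}_i · P_i(t)`. -/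
theorem Fos_eq_linear_comb_of_maxima {Ω : Type*} [MeasurableSpace Ω] (μ : Measure Ω)
    [IsProbabilityMeasure μ] {n : ℕ} (X : Fin n → Ω → ℝ) (hmeas : ∀ i, Measurable (X i))
    (hexch : Exchangeable μ X) (k : ℕ) (hk : 1 ≤ k) (hkn : k ≤ n) (t : ℝ) :
    Fos μ X k t = ∑ i ∈ Finset.Icc k n, (Wcoef n k i : ℝ) * Pmax μ X i t := by
  classical
  set c : Finset (Fin n) → ℝ := fun T => (μ {ω | FsetP X t ω = T}).toReal with hc
  have hfin : ∀ T : Finset (Fin n), μ {ω | FsetP X t ω = T} ≠ ⊤ :=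
    fun T => measure_ne_top μ _
  have hFos : Fos μ X k t = ∑ T ∈ univ.filter (fun T : Finset (Fin n) => k ≤ T.card), c T := by
    unfold Fos
    have h0 : {ω | k ≤ (Finset.univ.filter fun i : Fin n => X i ω ≤ t).card}
        = {ω | k ≤ (FsetP X t ω).card} := rfl
    rw [h0, measure_partition μ X hmeas t (fun T => k ≤ T.card)]
    rw [ENNReal.toReal_sum (fun T _ => hfin T)]
  have hP : ∀ i : ℕ, i ≤ n → (n.choose i : ℝ) * Pmax μ X i t
      = ∑ T ∈ (univ : Finset (Finset (Fin n))), (T.card.choose i : ℝ) * c T := by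
    intro i hi
    have h := congrArg ENNReal.toReal (count_eq μ X hmeas hexch t hi)
    rw [ENNReal.toReal_mul,
      ENNReal.toReal_sum (fun T _ => ENNReal.mul_ne_top (ENNReal.natCast_ne_top _) (hfin T))]
      at h
    simp only [ENNReal.toReal_natCast, ENNReal.toReal_mul] at h
    unfold Pmax
    exact h
  have hind : ∀ m : ℕ, m ≤ n → (if k ≤ m then (1:ℝ) else 0)
      = ∑ i ∈ Finset.Icc k n, (-1:ℝ)^(i-k) * ((i-1).choose (k-1)) * (m.choose i) := by
    intro m hm
    have h := congrArg (fun z : ℤ => (z : ℝ)) (indicator_sum_eq hk m hm)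
    push_cast at h
    convert h using 1
  have hcardle : ∀ T : Finset (Fin n), T.card ≤ n := by
    intro T
    have := Finset.card_le_univ T
    simpa using this
  rw [hFos]
  symm
  calc ∑ i ∈ Finset.Icc k n, (Wcoef n k i : ℝ) * Pmax μ X i t
      = ∑ i ∈ Finset.Icc k n, ((-1:ℝ)^(i-k) * ((i-1).choose (k-1)))
          * ((n.choose i : ℝ) * Pmax μ X i t) := by
        apply Finset.sum_congr rfl
        intro i hi
        simp only [mem_Icc] at hi
        rw [Wcoef_eq hk hi.1 hi.2]
        push_cast
        ring
    _ = ∑ i ∈ Finset.Icc k n, ((-1:ℝ)^(i-k) * ((i-1).choose (k-1)))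
          * (∑ T ∈ (univ : Finset (Finset (Fin n))), (T.card.choose i : ℝ) * c T) := by
        apply Finset.sum_congr rfl
        intro i hi
        simp only [mem_Icc] at hi
        rw [hP i hi.2]
    _ = ∑ T ∈ (univ : Finset (Finset (Fin n))),
          ∑ i ∈ Finset.Icc k n,
            ((-1:ℝ)^(i-k) * ((i-1).choose (k-1)) * (T.card.choose i)) * c T := by
        rw [Finset.sum_comm]
        apply Finset.sum_congr rfl
        intro i _
        rw [Finset.mul_sum]
        apply Finset.sum_congr rfl
        intro T _
        ring
    _ = ∑ T ∈ (univ : Finset (Finset (Fin n))), (if k ≤ T.card then (1:ℝ) else 0) * c T := by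
        apply Finset.sum_congr rfl
        intro T _
        rw [← Finset.sum_mul, ← hind T.card (hcardle T)]
    _ = ∑ T ∈ univ.filter (fun T : Finset (Fin n) => k ≤ T.card), c T := by
        rw [Finset.sum_filter]
        apply Finset.sum_congr rfl
        intro T _
        by_cases h : k ≤ T.card <;> simp [h]
end

section
/- For n = 3 exchangeable integrable random variables, the expectation of the median (2nd order statistic) satisfies E[X_{(3,2)}] = 3·E[max(X_1, X_2)] − 2·E[max(X_1, X_2, X_3)]. -/
open MeasureTheory Finset

open scoped Classical in
/-- The `k`-th smallest value among `v 0, ..., v (n-1)` (the `k`-th order statistic). -/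
noncomputable def orderStat {n : ℕ} (k : ℕ) (v : Fin n → ℝ) : ℝ :=
  sInf {t : ℝ | k ≤ (Finset.univ.filter fun i : Fin n => v i ≤ t).card}

lemma orderStat2_eq (v : Fin 3 → ℝ) :
    orderStat 2 v = max (min (v 0) (v 1)) (min (max (v 0) (v 1)) (v 2)) := by
  classical
  unfold orderStat
  have hset : {t : ℝ | 2 ≤ (Finset.univ.filter fun i : Fin 3 => v i ≤ t).card}
      = Set.Ici (max (min (v 0) (v 1)) (min (max (v 0) (v 1)) (v 2))) := by
    ext t
    simp only [Set.mem_setOf_eq, Set.mem_Ici, max_le_iff, min_le_iff, Finset.card_filter,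
      Fin.sum_univ_three]
    rcases le_or_gt (v 0) t with h0|h0 <;> rcases le_or_gt (v 1) t with h1|h1 <;>
      rcases le_or_gt (v 2) t with h2|h2 <;>
      simp [h0, h1, h2, not_le.mpr, le_of_lt]
  rw [hset, csInf_Ici]

lemma med_eq (a b c : ℝ) :
    max (min a b) (min (max a b) c)
      = max a b + max a c + max b c - 2 * max a (max b c) := by
  rcases le_total a b with h|h <;> rcases le_total b c with h'|h' <;>
    rcases le_total a c with h''|h'' <;>
    simp [max_def, min_def] <;> split_ifs <;> linarith

lemma exch_integral {Ω : Type*} [MeasurableSpace Ω] (μ : Measure Ω)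
    {n : ℕ} (X : Fin n → Ω → ℝ) (hmeas : ∀ i, Measurable (X i))
    (hexch : Exchangeable μ X) (σ : Equiv.Perm (Fin n))
    (g : (Fin n → ℝ) → ℝ) (hg : Measurable g) :
    ∫ ω, g (fun i => X (σ i) ω) ∂μ = ∫ ω, g (fun i => X i ω) ∂μ := by
  have hT : ∀ τ : Equiv.Perm (Fin n), Measurable (fun ω => fun i => X (τ i) ω) :=
    fun τ => measurable_pi_lambda _ (fun i => hmeas (τ i))
  rw [← integral_map (hT σ).aemeasurable hg.aestronglyMeasurable,
    hexch σ, integral_map]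
  · exact (measurable_pi_lambda _ (fun i => hmeas i)).aemeasurable
  · exact hg.aestronglyMeasurable

/-- For `n = 3` exchangeable integrable random variables, the expectation of the median is
`E[X_{(3,2)}] = 3·E[max(X_1, X_2)] - 2·E[max(X_1, X_2, X_3)]`. -/
theorem median_three {Ω : Type*} [MeasurableSpace Ω] (μ : Measure Ω)
    [IsProbabilityMeasure μ] (X : Fin 3 → Ω → ℝ) (hmeas : ∀ i, Measurable (X i))
    (hint : ∀ i, Integrable (X i) μ) (hexch : Exchangeable μ X) :
    ∫ ω, orderStat 2 (fun i => X i ω) ∂μ =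
      3 * ∫ ω, max (X 0 ω) (X 1 ω) ∂μ - 2 * ∫ ω, max (X 0 ω) (max (X 1 ω) (X 2 ω)) ∂μ := by
  have hg01 : Measurable (fun f : Fin 3 → ℝ => max (f 0) (f 1)) :=
    (measurable_pi_apply 0).max (measurable_pi_apply 1)
  have hg02 : Measurable (fun f : Fin 3 → ℝ => max (f 0) (f 2)) :=
    (measurable_pi_apply 0).max (measurable_pi_apply 2)
  -- E[max(X0,X2)] = E[max(X0,X1)]
  have h02 : ∫ ω, max (X 0 ω) (X 2 ω) ∂μ = ∫ ω, max (X 0 ω) (X 1 ω) ∂μ := by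
    have h := exch_integral μ X hmeas hexch (Equiv.swap 1 2)
      (fun f => max (f 0) (f 1)) hg01
    have e0 : (Equiv.swap 1 2 : Equiv.Perm (Fin 3)) 0 = 0 := by decide
    have e1 : (Equiv.swap 1 2 : Equiv.Perm (Fin 3)) 1 = 2 := by decide
    simpa [e0, e1] using h
  -- E[max(X1,X2)] = E[max(X0,X2)]
  have h12 : ∫ ω, max (X 1 ω) (X 2 ω) ∂μ = ∫ ω, max (X 0 ω) (X 1 ω) ∂μ := by
    have h := exch_integral μ X hmeas hexch (Equiv.swap 0 1)
      (fun f => max (f 0) (f 2)) hg02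
    have e0 : (Equiv.swap 0 1 : Equiv.Perm (Fin 3)) 0 = 1 := by decide
    have e2 : (Equiv.swap 0 1 : Equiv.Perm (Fin 3)) 2 = 2 := by decide
    rw [show (∫ ω, max (X 1 ω) (X 2 ω) ∂μ) = ∫ ω, max (X ((Equiv.swap 0 1) 0) ω)
      (X ((Equiv.swap 0 1) 2) ω) ∂μ by rw [e0, e2]]
    rw [h, h02]
  -- integrabilities
  have i01 : Integrable (fun ω => max (X 0 ω) (X 1 ω)) μ := (hint 0).sup (hint 1)
  have i02 : Integrable (fun ω => max (X 0 ω) (X 2 ω)) μ := (hint 0).sup (hint 2)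
  have i12 : Integrable (fun ω => max (X 1 ω) (X 2 ω)) μ := (hint 1).sup (hint 2)
  have i3 : Integrable (fun ω => max (X 0 ω) (max (X 1 ω) (X 2 ω))) μ :=
    (hint 0).sup ((hint 1).sup (hint 2))
  have key : ∀ ω, orderStat 2 (fun i => X i ω) =
      max (X 0 ω) (X 1 ω) + max (X 0 ω) (X 2 ω) + max (X 1 ω) (X 2 ω)
        - 2 * max (X 0 ω) (max (X 1 ω) (X 2 ω)) := by
    intro ω
    rw [orderStat2_eq (fun i => X i ω), med_eq]
  have iS : Integrable (fun ω => max (X 0 ω) (X 1 ω) + max (X 0 ω) (X 2 ω)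
      + max (X 1 ω) (X 2 ω)) μ := (i01.add i02).add i12
  have iSS : Integrable (fun ω => max (X 0 ω) (X 1 ω) + max (X 0 ω) (X 2 ω)) μ := i01.add i02
  simp_rw [key]
  rw [integral_sub iS (i3.const_mul 2), integral_add iSS i12,
    integral_add i01 i02, MeasureTheory.integral_const_mul, h02, h12]
  ring
end
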